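/- For d an odd prime and s,t with s²+t² ≡ 1 mod d, the complementary channel of the discrete beam splitter satisfies Λ^c_{s,σ} = 𝒜 ∘ Λ_{t,𝒜(σ)}, where 𝒜(ρ) = AρA† is conjugation by the phase-space inversion operator. Equivalently, for all states ρ and all phase-space points x: Ξ_{Λ^c_{s,σ}(ρ)}(x) = Ξ_ρ(−tx)Ξ_σ(sx) = Ξ_{𝒜∘Λ_{t,𝒜(σ)}(ρ)}(x). -/
import Mathlib

open Matrix Kronecker BigOperators
open scoped ComplexOrder

noncomputable def omega_d (d : ℕ) : ℂ := Complex.exp (2 * Real.pi * Complex.I / d)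

noncomputable def Xmat (d : ℕ) : Matrix (ZMod d) (ZMod d) ℂ :=
  Matrix.of fun k l => if k = l + 1 then 1 else 0

noncomputable def Zmat (d : ℕ) : Matrix (ZMod d) (ZMod d) ℂ :=
  Matrix.diagonal fun k => omega_d d ^ k.val

noncomputable def weyl (d : ℕ) [NeZero d] (p q : ZMod d) : Matrix (ZMod d) (ZMod d) ℂ :=
  omega_d d ^ ((-(2⁻¹ : ZMod d) * p * q).val) • (Zmat d ^ p.val * Xmat d ^ q.val)

noncomputable def bs (d : ℕ) (s t : ZMod d) :
    Matrix (ZMod d × ZMod d) (ZMod d × ZMod d) ℂ :=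
  Matrix.of fun a b => if a.1 = s * b.1 + t * b.2 ∧ a.2 = - t * b.1 + s * b.2 then 1 else 0

noncomputable def ptrB {α β : Type*} [Fintype β] (M : Matrix (α × β) (α × β) ℂ) :
    Matrix α α ℂ := Matrix.of fun i j => ∑ b, M (i, b) (j, b)

noncomputable def ptrA {α β : Type*} [Fintype α] (M : Matrix (α × β) (α × β) ℂ) :
    Matrix β β ℂ := Matrix.of fun i j => ∑ a, M (a, i) (a, j)

noncomputable def chan (d : ℕ) [NeZero d] (s t : ZMod d)
    (σ ρ : Matrix (ZMod d) (ZMod d) ℂ) : Matrix (ZMod d) (ZMod d) ℂ :=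
  ptrB (bs d s t * (ρ ⊗ₖ σ) * (bs d s t)ᴴ)

noncomputable def chanC (d : ℕ) [NeZero d] (s t : ZMod d)
    (σ ρ : Matrix (ZMod d) (ZMod d) ℂ) : Matrix (ZMod d) (ZMod d) ℂ :=
  ptrA (bs d s t * (ρ ⊗ₖ σ) * (bs d s t)ᴴ)

noncomputable def charFun (d : ℕ) [NeZero d] (ρ : Matrix (ZMod d) (ZMod d) ℂ)
    (x : ZMod d × ZMod d) : ℂ := (ρ * weyl d (-x.1) (-x.2)).trace

noncomputable def Amat (d : ℕ) : Matrix (ZMod d) (ZMod d) ℂ :=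
  Matrix.of fun k l => if k = -l then 1 else 0

def IsDensity {n : Type*} [Fintype n] (ρ : Matrix n n ℂ) : Prop :=
  ρ.PosSemidef ∧ ρ.trace = 1

lemma omega_pow_d (d : ℕ) [NeZero d] : omega_d d ^ d = 1 := by
  have hd0 : (d:ℂ) ≠ 0 := Nat.cast_ne_zero.mpr (NeZero.ne d)
  rw [omega_d, ← Complex.exp_nat_mul]
  rw [show (d : ℂ) * (2 * Real.pi * Complex.I / d) = 2 * Real.pi * Complex.I by field_simp]
  exact Complex.exp_two_pi_mul_I

lemma omega_pow_mod (d : ℕ) [NeZero d] (n : ℕ) : omega_d d ^ n = omega_d d ^ (n % d) := by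
  conv_lhs => rw [← Nat.div_add_mod n d]
  rw [pow_add, pow_mul, omega_pow_d, one_pow, one_mul]

noncomputable def chi (d : ℕ) (a : ZMod d) : ℂ := omega_d d ^ a.val

lemma chi_natCast (d : ℕ) [NeZero d] (n : ℕ) : chi d (n : ZMod d) = omega_d d ^ n := by
  rw [chi, ZMod.val_natCast, ← omega_pow_mod]

lemma chi_add (d : ℕ) [NeZero d] (a b : ZMod d) : chi d (a + b) = chi d a * chi d b := by
  have h : a + b = ((a.val + b.val : ℕ) : ZMod d) := by
    push_cast
    simp [ZMod.natCast_val, ZMod.cast_id]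
  rw [h, chi_natCast, pow_add]; rfl

lemma Xpow_apply (d : ℕ) [NeZero d] (n : ℕ) (k l : ZMod d) :
    (Xmat d ^ n) k l = if k = l + (n : ZMod d) then 1 else 0 := by
  induction n generalizing k l with
  | zero => simp [Matrix.one_apply, eq_comm]
  | succ n ih =>
    rw [pow_succ', Matrix.mul_apply]
    rw [Finset.sum_eq_single (l + (n : ZMod d))]
    · rw [ih, if_pos rfl, mul_one, Xmat, Matrix.of_apply]
      push_cast
      rw [show l + ((n : ZMod d) + 1) = l + (n : ZMod d) + 1 by ring]
    · intro b _ hb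
      rw [ih, if_neg hb, mul_zero]
    · simp

lemma weyl_apply (d : ℕ) [NeZero d] (p q : ZMod d) (k l : ZMod d) :
    weyl d p q k l = chi d (-(2⁻¹ : ZMod d) * p * q + p * k) * (if k = l + q then 1 else 0) := by
  have hkp : omega_d d ^ (k.val * p.val) = chi d (p * k) := by
    rw [← chi_natCast]
    congr 1
    push_cast
    simp only [ZMod.natCast_val, ZMod.cast_id]
    ring
  rw [weyl, Matrix.smul_apply, Zmat, Matrix.diagonal_pow, Matrix.diagonal_mul,
    Xpow_apply, ZMod.natCast_val, ZMod.cast_id, smul_eq_mul, Pi.pow_apply, ← pow_mul,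
    hkp, chi_add]
  rw [← mul_assoc]
  rfl

lemma charFun_eq (d : ℕ) [NeZero d] (hinv : (2⁻¹ : ZMod d) * 2 = 1)
    (ρ : Matrix (ZMod d) (ZMod d) ℂ) (x : ZMod d × ZMod d) :
    charFun d ρ x = ∑ k, ρ k (k - x.2) * chi d (2⁻¹ * x.1 * x.2 - x.1 * k) := by
  rw [charFun, Matrix.trace]
  simp only [Matrix.diag_apply, Matrix.mul_apply, weyl_apply, mul_ite, mul_one, mul_zero,
    Finset.sum_ite_eq', Finset.mem_univ, if_pos]
  refine Finset.sum_congr rfl fun k _ => ?_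
  rw [show k + -x.2 = k - x.2 from (sub_eq_add_neg k x.2).symm]
  congr 1
  congr 1
  linear_combination (-(x.1 * x.2)) * hinv

lemma bs_apply (d : ℕ) (s t : ZMod d) (hst : s ^ 2 + t ^ 2 = 1)
    (u b : ZMod d × ZMod d) :
    bs d s t u b = if b = (s * u.1 - t * u.2, t * u.1 + s * u.2) then 1 else 0 := by
  rw [bs, Matrix.of_apply]
  congr 1
  rw [eq_iff_iff, Prod.ext_iff]
  dsimp only
  constructor
  · rintro ⟨h1, h2⟩
    constructor
    · linear_combination -s * h1 + t * h2 - b.1 * hst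
    · linear_combination -t * h1 - s * h2 - b.2 * hst
  · rintro ⟨h1, h2⟩
    constructor
    · linear_combination -s * h1 - t * h2 - u.1 * hst
    · linear_combination t * h1 - s * h2 - u.2 * hst

lemma sandwich_apply (d : ℕ) [NeZero d] (s t : ZMod d) (hst : s ^ 2 + t ^ 2 = 1)
    (K : Matrix (ZMod d × ZMod d) (ZMod d × ZMod d) ℂ) (u v : ZMod d × ZMod d) :
    (bs d s t * K * (bs d s t)ᴴ) u v
      = K (s * u.1 - t * u.2, t * u.1 + s * u.2) (s * v.1 - t * v.2, t * v.1 + s * v.2) := by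
  simp only [Matrix.mul_apply, Matrix.conjTranspose_apply, bs_apply d s t hst,
    apply_ite (star : ℂ → ℂ), star_one, star_zero, ite_mul, mul_ite, one_mul, mul_one, zero_mul, mul_zero,
    Finset.sum_ite_eq', Finset.sum_ite_eq, Finset.mem_univ, if_pos]

lemma chan_apply (d : ℕ) [NeZero d] (s t : ZMod d) (hst : s ^ 2 + t ^ 2 = 1)
    (σ ρ : Matrix (ZMod d) (ZMod d) ℂ) (i j : ZMod d) :
    chan d s t σ ρ i j
      = ∑ b, ρ (s * i - t * b) (s * j - t * b) * σ (t * i + s * b) (t * j + s * b) := by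
  rw [chan, ptrB, Matrix.of_apply]
  refine Finset.sum_congr rfl fun b _ => ?_
  rw [sandwich_apply d s t hst]
  rfl

lemma chanC_apply (d : ℕ) [NeZero d] (s t : ZMod d) (hst : s ^ 2 + t ^ 2 = 1)
    (σ ρ : Matrix (ZMod d) (ZMod d) ℂ) (i j : ZMod d) :
    chanC d s t σ ρ i j
      = ∑ a, ρ (s * a - t * i) (s * a - t * j) * σ (t * a + s * i) (t * a + s * j) := by
  rw [chanC, ptrA, Matrix.of_apply]
  refine Finset.sum_congr rfl fun a _ => ?_
  rw [sandwich_apply d s t hst]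
  rfl

lemma Amat_apply' (d : ℕ) (i l : ZMod d) :
    Amat d i l = if l = -i then 1 else 0 := by
  rw [Amat, Matrix.of_apply]
  congr 1
  rw [eq_iff_iff]
  constructor
  · intro h; rw [h, neg_neg]
  · intro h; rw [h, neg_neg]

lemma Amat_conj (d : ℕ) [NeZero d] (M : Matrix (ZMod d) (ZMod d) ℂ) (i j : ZMod d) :
    (Amat d * M * (Amat d)ᴴ) i j = M (-i) (-j) := by
  simp only [Matrix.mul_apply, Matrix.conjTranspose_apply, Amat_apply',
    apply_ite (star : ℂ → ℂ), star_one, star_zero, ite_mul, mul_ite,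
    one_mul, mul_one, zero_mul, mul_zero,
    Finset.sum_ite_eq', Finset.sum_ite_eq, Finset.mem_univ, if_pos]

theorem stmt16 (d : ℕ) [NeZero d] (hd : d.Prime) (hodd : Odd d) (s t : ZMod d)
    (hst : s ^ 2 + t ^ 2 = 1) (σ : Matrix (ZMod d) (ZMod d) ℂ) (hσ : IsDensity σ) :
    ∀ ρ : Matrix (ZMod d) (ZMod d) ℂ, IsDensity ρ →
      (chanC d s t σ ρ
          = Amat d * chan d t s (Amat d * σ * (Amat d)ᴴ) ρ * (Amat d)ᴴ) ∧
      ∀ x : ZMod d × ZMod d,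
        charFun d (chanC d s t σ ρ) x = charFun d ρ ((-t) • x) * charFun d σ (s • x) ∧
        charFun d (Amat d * chan d t s (Amat d * σ * (Amat d)ᴴ) ρ * (Amat d)ᴴ) x
          = charFun d ρ ((-t) • x) * charFun d σ (s • x) := by
  haveI := Fact.mk hd
  have h2 : (2 : ZMod d) ≠ 0 := by
    intro h
    have hdvd : d ∣ 2 := by
      have : ((2 : ℕ) : ZMod d) = 0 := by exact_mod_cast h
      exact (ZMod.natCast_eq_zero_iff 2 d).mp this
    have h1 := Nat.le_of_dvd (by norm_num) hdvd
    have h3 := hd.two_le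
    have h4 := Nat.odd_iff.mp hodd
    omega
  have hinv : (2⁻¹ : ZMod d) * 2 = 1 := inv_mul_cancel₀ h2
  have hst' : t ^ 2 + s ^ 2 = 1 := by linear_combination hst
  intro ρ hρ
  have hmain : chanC d s t σ ρ
      = Amat d * chan d t s (Amat d * σ * (Amat d)ᴴ) ρ * (Amat d)ᴴ := by
    ext i j
    rw [Amat_conj, chanC_apply d s t hst, chan_apply d t s hst']
    simp only [Amat_conj]
    refine Fintype.sum_bijective (fun a => -a) (Function.Involutive.bijective neg_involutive)
      _ _ fun a => ?_
    congr 1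
    · exact congrArg₂ ρ (by ring) (by ring)
    · exact congrArg₂ σ (by ring) (by ring)
  have hchar : ∀ x : ZMod d × ZMod d,
      charFun d (chanC d s t σ ρ) x = charFun d ρ ((-t) • x) * charFun d σ (s • x) := by
    rintro ⟨p, q⟩
    rw [charFun_eq d hinv, charFun_eq d hinv, charFun_eq d hinv]
    simp only [Prod.smul_fst, Prod.smul_snd, smul_eq_mul]
    rw [Finset.sum_mul_sum]
    simp only [chanC_apply d s t hst, Finset.sum_mul]
    rw [← Finset.sum_product', ← Finset.sum_product', Finset.univ_product_univ]
    refine Fintype.sum_bijective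
      (fun y : ZMod d × ZMod d => (-t * y.1 + s * y.2, s * y.1 + t * y.2))
      (Function.Involutive.bijective fun y => ?_) _ _ fun y => ?_
    · apply Prod.ext <;> dsimp only
      · linear_combination y.1 * hst
      · linear_combination y.2 * hst
    · obtain ⟨i, a⟩ := y
      dsimp only
      conv_rhs => rw [mul_mul_mul_comm, ← chi_add]
      congr 1
      · congr 1
        · exact congrArg₂ ρ (by ring) (by ring)
        · exact congrArg₂ σ (by ring) (by ring)
      · congr 1
        linear_combination (p * i - 2⁻¹ * p * q) * hst
  exact ⟨hmain, fun x => ⟨hchar x, by rw [← hmain]; exact hchar x⟩⟩
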